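/- arXiv:2103.08947 — 2 statements merged into one kernel-verified Lean document; each statement's English description precedes it below -/
import Mathlib

section
/- Let p be a prime with p ≡ 1 or 9 (mod 16), write p = π·π̄ with π a prime element of ℤ[i], and set k = (3p+1)/4. Then for every nonzero ideal 𝔞 of ℤ[i] coprime to 4p, with primary generator α (i.e. α = a+bi with (a,b) ≡ (1,0) or (3,2) mod 4), one has ᾱ^{k−1}·χ(𝔞) ≡ α^{k−1} (mod p·ℤ[i]), where χ(𝔞) is the complex conjugate of (α/π)₄·(α/π̄)₄. -/
/-!
Put `m = (p - 1) / 4`, so that `k - 1 = 3m`. Modulo `π` we have `α^m ≡ q₁` and, conjugating the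
congruence modulo `π̄`, `ᾱ^m ≡ q̄₂`. As `q̄ = q³` for a fourth root of unity `q`, this gives
`ᾱ^{3m} q̄₁ q̄₂ ≡ q̄₂⁴ q̄₁ = q₁³ ≡ α^{3m}`; the same holds modulo `π̄` with the roles of `π` and `π̄`
exchanged. Finally `π` and `π̄` are coprime, since `π + π̄ = 2 Re π` is prime to `p = π π̄`.
-/

open scoped GaussianInt

/-- `α ∈ ℤ[i]` is primary if `α = a + bi` with `(a, b) ≡ (1, 0)` or `(3, 2) mod 4`. -/
def GaussianInt.IsPrimary (α : GaussianInt) : Prop :=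
  (α.re % 4 = 1 ∧ α.im % 4 = 0) ∨ (α.re % 4 = 3 ∧ α.im % 4 = 2)

theorem star_dvd_star {R : Type*} [CommSemiring R] [StarRing R] {a b : R} (h : a ∣ b) :
    star a ∣ star b :=
  map_dvd (starRingEnd R) h

namespace GaussianInt

theorem star_eq_pow_three_of_pow_four_eq_one {q : GaussianInt} (hq : q ^ 4 = 1) :
    star q = q ^ 3 := by
  have hunit : IsUnit q := IsUnit.of_pow_eq_one hq four_ne_zero
  have hnorm : q * star q = 1 := by
    rw [← Zsqrtd.norm_eq_mul_conj, (Zsqrtd.norm_eq_one_iff' (by norm_num) q).mpr hunit, Int.cast_one]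
  linear_combination (-star q) * hq + q ^ 3 * hnorm

theorem dvd_star_pow_mul_star_sub_pow {ρ α u v : GaussianInt} {m : ℕ} (hu : u ^ 4 = 1)
    (hv : v ^ 4 = 1) (hαu : ρ ∣ α ^ m - u) (hαv : star ρ ∣ α ^ m - v) :
    ρ ∣ star α ^ (3 * m) * star (u * v) - α ^ (3 * m) := by
  have hstarα : ρ ∣ star α ^ m - star v := by simpa using star_dvd_star hαv
  have hstarv : star v ^ 4 = 1 := by rw [← star_pow, hv, star_one]
  have key : star α ^ (3 * m) * star (u * v) - α ^ (3 * m)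
      = ((star α ^ m) ^ 3 - star v ^ 3) * star (u * v) - ((α ^ m) ^ 3 - u ^ 3) := by
    rw [star_mul', star_eq_pow_three_of_pow_four_eq_one hu, pow_mul', pow_mul']
    linear_combination u ^ 3 * hstarv
  rw [key]
  exact dvd_sub (dvd_mul_of_dvd_left (hstarα.trans (sub_dvd_pow_sub_pow _ _ 3)) _)
    (hαu.trans (sub_dvd_pow_sub_pow _ _ 3))

theorem isCoprime_star_of_natCast_eq_mul_star {p : ℕ} (hp : p.Prime) (hp2 : p ≠ 2)
    {π : GaussianInt} (h : (p : GaussianInt) = π * star π) : IsCoprime π (star π) := by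
  have hnorm : π.re ^ 2 + π.im ^ 2 = p := by
    have := congrArg Zsqrtd.re h
    simp only [Zsqrtd.re_natCast, Zsqrtd.re_mul, Zsqrtd.re_star, Zsqrtd.im_star, mul_neg, neg_mul,
      one_mul, neg_neg] at this
    linarith
  have hpZ : Prime (p : ℤ) := Nat.prime_iff_prime_int.mp hp
  have hnot_dvd : ¬ (p : ℤ) ∣ 2 * π.re := by
    intro hdvd
    have h2 : ¬ (p : ℤ) ∣ 2 := fun h2 =>
      hp2 ((Nat.prime_dvd_prime_iff_eq hp Nat.prime_two).mp (by exact_mod_cast h2))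
    have ha : (p : ℤ) ∣ π.re := (hpZ.dvd_mul.mp hdvd).resolve_left h2
    have hb : (p : ℤ) ∣ π.im := by
      refine hpZ.dvd_of_dvd_pow (n := 2) ?_
      rw [show π.im ^ 2 = p - π.re ^ 2 by linarith]
      exact dvd_sub dvd_rfl (dvd_pow ha two_ne_zero)
    have hsq : (p : ℤ) ^ 2 ∣ π.re ^ 2 + π.im ^ 2 :=
      dvd_add (pow_dvd_pow_of_dvd ha 2) (pow_dvd_pow_of_dvd hb 2)
    rw [hnorm] at hsq
    have := Int.le_of_dvd (by exact_mod_cast hp.pos) hsq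
    nlinarith [hp.two_le]
  obtain ⟨u, v, huv⟩ := (hpZ.coprime_iff_not_dvd.mpr hnot_dvd).symm.map (Int.castRingHom GaussianInt)
  have htrace : ((2 * π.re : ℤ) : GaussianInt) = π + star π := by
    ext <;> simp [two_mul]
  refine ⟨u + v * star π, u, ?_⟩
  simp only [eq_intCast, Int.cast_natCast] at huv
  rw [htrace, h] at huv
  linear_combination huv

end GaussianInt

theorem quartic_symbol_congruence_general (p : ℕ) (hp : p.Prime)
    (π : GaussianInt) (hpπ : (p : GaussianInt) = π * star π)
    (k : ℕ) (hk : 4 * k = 3 * p + 1)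
    (α : GaussianInt)
    (q₁ q₂ : GaussianInt) (hq₁root : q₁ ^ 4 = 1) (hq₂root : q₂ ^ 4 = 1)
    (hq₁ : π ∣ α ^ ((p - 1) / 4) - q₁) (hq₂ : star π ∣ α ^ ((p - 1) / 4) - q₂)
    (χ : GaussianInt) (hχ : χ = star (q₁ * q₂)) :
    (p : GaussianInt) ∣ (star α) ^ (k - 1) * χ - α ^ (k - 1) := by
  have hk1 : k - 1 = 3 * ((p - 1) / 4) := by omega
  rw [hk1, hχ, hpπ]
  refine (GaussianInt.isCoprime_star_of_natCast_eq_mul_star hp (by omega) hpπ).mul_dvd ?_ ?_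
  · exact GaussianInt.dvd_star_pow_mul_star_sub_pow hq₁root hq₂root hq₁ hq₂
  · rw [mul_comm q₁]
    exact GaussianInt.dvd_star_pow_mul_star_sub_pow hq₂root hq₁root hq₂ (by rwa [star_star])

/-- Let `p ≡ 1, 9 (mod 16)` be a prime, `p = π·π̄` in `ℤ[i]`, `k = (3p+1)/4`.  For `α` a
primary generator of an ideal coprime to `4p`, if `q₁ = (α/π)₄` and `q₂ = (α/π̄)₄` are the
quartic residue symbols (the fourth roots of unity congruent to `α^{(p−1)/4}` mod `π`,
resp. mod `π̄`) and `χ = conj(q₁·q₂)`, then `ᾱ^{k−1}·χ ≡ α^{k−1} (mod p·ℤ[i])`. -/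
theorem quartic_symbol_congruence (p : ℕ) (hp : p.Prime)
    (hp16 : p % 16 = 1 ∨ p % 16 = 9)
    (π : GaussianInt) (hπ : Prime π) (hpπ : (p : GaussianInt) = π * star π)
    (k : ℕ) (hk : 4 * k = 3 * p + 1)
    (α : GaussianInt) (hα : α.IsPrimary)
    (hcop : IsCoprime α ((4 * p : ℕ) : GaussianInt))
    (q₁ q₂ : GaussianInt) (hq₁root : q₁ ^ 4 = 1) (hq₂root : q₂ ^ 4 = 1)
    (hq₁ : π ∣ α ^ ((p - 1) / 4) - q₁) (hq₂ : star π ∣ α ^ ((p - 1) / 4) - q₂)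
    (χ : GaussianInt) (hχ : χ = star (q₁ * q₂)) :
    (p : GaussianInt) ∣ (star α) ^ (k - 1) * χ - α ^ (k - 1) :=
  quartic_symbol_congruence_general p hp π hpπ k hk α q₁ q₂ hq₁root hq₂root hq₁ hq₂ χ hχ
end

section
/- Every nonzero integral ideal 𝔞 of ℤ[ω] coprime to 3 can be written in the form 𝔞 = (r + 3(N + mω²)) for some r ∈ {1, 2} and some integers N, m, where ω = (−1+√−3)/2. -/
open Complex Real

/-- `ω = (−1+√−3)/2`, a primitive cube root of unity. -/
noncomputable def omegaCM : ℂ := (-1 + Real.sqrt 3 * I) / 2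

/-- The ring of Eisenstein integers `ℤ[ω]`, the ring of integers of `ℚ(√−3)`,
realized as a subring of `ℂ`. -/
noncomputable def EisensteinInts : Subring ℂ := Subring.closure {omegaCM}

lemma omegaCM_mem_EisensteinInts : omegaCM ∈ EisensteinInts :=
  Subring.subset_closure rfl

/-- `ω` as an element of `ℤ[ω]`. -/
noncomputable def omegaE : EisensteinInts := ⟨omegaCM, omegaCM_mem_EisensteinInts⟩

lemma omega_sq : omegaCM ^ 2 = -1 - omegaCM := by
  have hs : (Real.sqrt 3 : ℂ)^2 = 3 := by
    rw [← Complex.ofReal_pow, Real.sq_sqrt (by norm_num : (0:ℝ) ≤ 3)]; norm_num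
  have hI : (I:ℂ)^2 = -1 := Complex.I_sq
  unfold omegaCM
  linear_combination (I^2/4) * hs + (3/4) * hI

lemma conj_omega : (starRingEnd ℂ) omegaCM = -1 - omegaCM := by
  unfold omegaCM
  simp [map_div₀, map_sub, map_add, map_one, map_ofNat, Complex.conj_I, Complex.conj_ofReal]
  ring

lemma normSq_coeff (a b : ℤ) :
    Complex.normSq ((a:ℂ) + b * omegaCM) = ((a^2 - a*b + b^2 : ℤ) : ℝ) := by
  apply Complex.ofReal_injective
  rw [← Complex.mul_conj]
  rw [map_add, map_mul, conj_omega, map_intCast, map_intCast]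
  push_cast
  linear_combination (-(b:ℂ)^2) * omega_sq

lemma exists_coeffs' : ∀ x ∈ EisensteinInts, ∃ a b : ℤ, x = (a:ℂ) + b * omegaCM := by
  intro x hx
  induction hx using Subring.closure_induction with
  | mem x hx => exact ⟨0, 1, by simp [Set.mem_singleton_iff.mp hx]⟩
  | one => exact ⟨1, 0, by simp⟩
  | zero => exact ⟨0, 0, by simp⟩
  | add x y hx hy ihx ihy =>
      obtain ⟨a, b, ha⟩ := ihx; obtain ⟨c, d, hc⟩ := ihy
      exact ⟨a + c, b + d, by push_cast; rw [ha, hc]; ring⟩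
  | neg x hx ih =>
      obtain ⟨a, b, ha⟩ := ih
      exact ⟨-a, -b, by push_cast; rw [ha]; ring⟩
  | mul x y hx hy ihx ihy =>
      obtain ⟨a, b, ha⟩ := ihx; obtain ⟨c, d, hc⟩ := ihy
      refine ⟨a*c - b*d, a*d + b*c - b*d, ?_⟩
      push_cast; rw [ha, hc]
      linear_combination ((b:ℂ)*(d:ℂ)) * omega_sq

lemma exists_coeffs (z : EisensteinInts) : ∃ a b : ℤ, (z:ℂ) = (a:ℂ) + b * omegaCM :=
  exists_coeffs' z.1 z.2

lemma coeff_unique {x1 x2 y1 y2 : ℤ}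
    (h : (x1:ℂ) + x2 * omegaCM = (y1:ℂ) + y2 * omegaCM) : x1 = y1 ∧ x2 = y2 := by
  by_cases h2 : x2 = y2
  · subst h2
    have : (x1:ℂ) = y1 := by
      have := add_right_cancel h
      exact_mod_cast this
    exact ⟨by exact_mod_cast this, rfl⟩
  · exfalso
    have hne0 : (y2 - x2 : ℤ) ≠ 0 := sub_ne_zero.mpr (fun hh => h2 hh.symm)
    have hne : ((y2:ℂ) - (x2:ℂ)) ≠ 0 := by
      rw [← Int.cast_sub]; exact_mod_cast hne0
    set t : ℝ := ((x1 - y1 : ℤ):ℝ) / ((y2 - x2 : ℤ):ℝ) with ht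
    have homega : omegaCM = (t:ℂ) := by
      rw [ht]
      push_cast
      rw [eq_div_iff hne]
      linear_combination -h
    have hsq := omega_sq
    rw [homega] at hsq
    have : t^2 = -1 - t := by exact_mod_cast hsq
    nlinarith [sq_nonneg (t + 1/2)]

lemma round_bound (e n : ℤ) (hn : 0 < n) : 2 * |e - round ((e:ℚ)/n) * n| ≤ n := by
  set q : ℤ := round ((e:ℚ)/n) with hq
  have hn' : (0:ℚ) < (n:ℚ) := by exact_mod_cast hn
  have h := abs_sub_round ((e:ℚ)/n)
  rw [← @Int.cast_le ℚ]
  push_cast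
  have key : (e:ℚ) - q*n = ((e:ℚ)/n - q) * n := by field_simp
  rw [key, abs_mul, abs_of_pos hn']
  calc 2 * (|(e:ℚ)/n - q| * n) ≤ 2 * ((1/2) * n) := by
        apply mul_le_mul_of_nonneg_left _ (by norm_num)
        exact mul_le_mul_of_nonneg_right h hn'.le
    _ = n := by ring

lemma key_div_aux (a b c d q1 q2 : ℤ) (hn : 0 < c^2 - c*d + d^2)
    (h1 : 2 * |(a*c - a*d + b*d) - q1*(c^2 - c*d + d^2)| ≤ c^2 - c*d + d^2)
    (h2 : 2 * |(b*c - a*d) - q2*(c^2 - c*d + d^2)| ≤ c^2 - c*d + d^2) :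
      (a - (q1*c - q2*d))^2 - (a - (q1*c - q2*d))*(b - (q1*d + q2*c - q2*d))
        + (b - (q1*d + q2*c - q2*d))^2 < c^2 - c*d + d^2 := by
  obtain ⟨n, hn0⟩ : ∃ n : ℤ, n = c^2 - c*d + d^2 := ⟨_, rfl⟩
  obtain ⟨ε1, hε1⟩ : ∃ x : ℤ, x = (a*c - a*d + b*d) - q1*n := ⟨_, rfl⟩
  obtain ⟨ε2, hε2⟩ : ∃ x : ℤ, x = (b*c - a*d) - q2*n := ⟨_, rfl⟩
  obtain ⟨R1, hR1⟩ : ∃ x : ℤ, x = a - (q1*c - q2*d) := ⟨_, rfl⟩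
  obtain ⟨R2, hR2⟩ : ∃ x : ℤ, x = b - (q1*d + q2*c - q2*d) := ⟨_, rfl⟩
  rw [← hn0] at hn h1 h2 ⊢
  rw [← hε1] at h1
  rw [← hε2] at h2
  rw [← hR1, ← hR2]
  have hid : n * (R1^2 - R1*R2 + R2^2) = ε1^2 - ε1*ε2 + ε2^2 := by
    rw [hR1, hR2, hε1, hε2, hn0]; ring
  have h1' : 4*ε1^2 ≤ n^2 := by nlinarith [_root_.sq_abs ε1, abs_nonneg ε1]
  have h2' : 4*ε2^2 ≤ n^2 := by nlinarith [_root_.sq_abs ε2, abs_nonneg ε2]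
  have habs : (2*|ε1|)*(2*|ε2|) ≤ n^2 := by
    have := mul_le_mul h1 h2 (by positivity) hn.le
    nlinarith [this]
  have hmul : -(4*(ε1*ε2)) ≤ n^2 := by
    nlinarith [abs_nonneg ε1, abs_nonneg ε2, neg_abs_le (ε1*ε2), abs_mul ε1 ε2]
  have hnn : (0:ℤ) < n^2 := by positivity
  have hsmall : ε1^2 - ε1*ε2 + ε2^2 < n^2 := by linarith
  have hfin : n * (R1^2 - R1*R2 + R2^2) < n * n := by
    rw [hid]; nlinarith [hsmall]
  exact lt_of_mul_lt_mul_left hfin hn.le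

lemma key_div (a b c d : ℤ) (hn : 0 < c^2 - c*d + d^2) :
    ∃ q1 q2 : ℤ,
      (a - (q1*c - q2*d))^2 - (a - (q1*c - q2*d))*(b - (q1*d + q2*c - q2*d))
        + (b - (q1*d + q2*c - q2*d))^2 < c^2 - c*d + d^2 :=
  ⟨_, _, key_div_aux a b c d _ _ hn
    (round_bound (a*c - a*d + b*d) _ hn) (round_bound (b*c - a*d) _ hn)⟩

lemma nrm_nonneg (a b : ℤ) : 0 ≤ a^2 - a*b + b^2 := by
  nlinarith [sq_nonneg (2*a - b), sq_nonneg b]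

/-- Every nonzero integral ideal of `ℤ[ω]` coprime to `3` is of the form `(r + 3(N + mω²))`
with `r ∈ {1, 2}` and `N, m ∈ ℤ`. -/
theorem ideal_form_eisensteinInt (I : Ideal EisensteinInts) (hI : I ≠ ⊥)
    (hcop : I ⊔ Ideal.span {(3 : EisensteinInts)} = ⊤) :
    ∃ r N m : ℤ, (r = 1 ∨ r = 2) ∧
      I = Ideal.span {(r : EisensteinInts) + 3 * ((N : EisensteinInts) +
        (m : EisensteinInts) * omegaE ^ 2)} := by
  classical
  obtain ⟨x0, hx0I, hx00⟩ := Submodule.ne_bot_iff I |>.mp hI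
  set S : Set ℕ := {k | ∃ z : EisensteinInts, z ∈ I ∧ z ≠ 0 ∧ (k:ℝ) = Complex.normSq (z:ℂ)}
    with hSdef
  have hmemS : ∀ z : EisensteinInts, z ∈ I → z ≠ 0 →
      ∃ k : ℕ, k ∈ S ∧ (k:ℝ) = Complex.normSq (z:ℂ) := by
    intro z hzI hz0
    obtain ⟨a, b, hab⟩ := exists_coeffs z
    have hcast : (((a^2 - a*b + b^2).toNat : ℕ) : ℝ) = ((a^2 - a*b + b^2 : ℤ) : ℝ) := by
      exact_mod_cast congrArg (Int.cast : ℤ → ℝ) (Int.toNat_of_nonneg (nrm_nonneg a b))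
    have hval : (((a^2 - a*b + b^2).toNat : ℕ) : ℝ) = Complex.normSq (z:ℂ) := by
      rw [hab, normSq_coeff, hcast]
    exact ⟨_, ⟨z, hzI, hz0, hval⟩, hval⟩
  have hSne : S.Nonempty := by
    obtain ⟨k, hk, _⟩ := hmemS x0 hx0I hx00
    exact ⟨k, hk⟩
  obtain ⟨β, hβI, hβ0, hβk⟩ := Nat.sInf_mem hSne
  obtain ⟨c, d, hβ⟩ := exists_coeffs β
  have hβC : (β:ℂ) ≠ 0 := by
    simpa using hβ0
  have hnR : Complex.normSq (β:ℂ) = ((c^2 - c*d + d^2 : ℤ):ℝ) := by rw [hβ, normSq_coeff]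
  have hnpos : 0 < c^2 - c*d + d^2 := by
    have := Complex.normSq_pos.mpr hβC
    rw [hnR] at this
    exact_mod_cast this
  -- I is principal, generated by β
  have hspan : I = Ideal.span {β} := by
    apply le_antisymm
    · intro α hα
      obtain ⟨a, b, hαC⟩ := exists_coeffs α
      obtain ⟨q1, q2, hlt⟩ := key_div a b c d hnpos
      set q : EisensteinInts := ((q1:ℤ):EisensteinInts) + ((q2:ℤ):EisensteinInts) * omegaE
        with hqdef
      set r : EisensteinInts := α - q * β with hrdef
      have hrI : r ∈ I := I.sub_mem hα (I.mul_mem_left q hβI)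
      have hrC : (r:ℂ) = ((a - (q1*c - q2*d) : ℤ):ℂ)
          + ((b - (q1*d + q2*c - q2*d) : ℤ):ℂ) * omegaCM := by
        have : (r:ℂ) = (α:ℂ) - ((q1:ℂ) + (q2:ℂ) * omegaCM) * (β:ℂ) := by
          rw [hrdef, hqdef]; push_cast [omegaE]; ring
        rw [this, hαC, hβ]
        push_cast
        linear_combination (-(q2:ℂ)*(d:ℂ)) * omega_sq
      by_cases hr0 : r = 0
      · have : α = q * β := by
          have := sub_eq_zero.mp (hrdef ▸ hr0)
          exact this
        rw [this]
        exact Ideal.mem_span_singleton'.mpr ⟨q, rfl⟩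
      · exfalso
        obtain ⟨k, hkS, hkval⟩ := hmemS r hrI hr0
        have hrN : Complex.normSq (r:ℂ)
            = (((a - (q1*c - q2*d))^2 - (a - (q1*c - q2*d))*(b - (q1*d + q2*c - q2*d))
              + (b - (q1*d + q2*c - q2*d))^2 : ℤ):ℝ) := by rw [hrC, normSq_coeff]
        have hk_lt : (k:ℝ) < ((c^2 - c*d + d^2 : ℤ):ℝ) := by
          rw [hkval, hrN]; exact_mod_cast hlt
        have hk0 : ((sInf S : ℕ):ℝ) = ((c^2 - c*d + d^2 : ℤ):ℝ) := by rw [hβk, hnR]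
        have : (k:ℝ) < ((sInf S : ℕ):ℝ) := by rw [hk0]; exact hk_lt
        have hklt : k < sInf S := by exact_mod_cast this
        exact absurd (Nat.sInf_le hkS) (by omega)
    · rw [Ideal.span_le, Set.singleton_subset_iff]; exact hβI
  -- extract Bézout relation mod 3
  have h1mem : (1 : EisensteinInts) ∈ I ⊔ Ideal.span {(3 : EisensteinInts)} := by
    rw [hcop]; trivial
  obtain ⟨y, hy, z, hz, hyz⟩ := Submodule.mem_sup.mp h1mem
  rw [hspan] at hy
  obtain ⟨s, hs⟩ := Ideal.mem_span_singleton'.mp hy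
  obtain ⟨t, ht⟩ := Ideal.mem_span_singleton'.mp hz
  obtain ⟨s1, s2, hsC⟩ := exists_coeffs s
  obtain ⟨t1, t2, htC⟩ := exists_coeffs t
  have hC : ((s1:ℂ) + s2*omegaCM) * ((c:ℂ) + d*omegaCM) + ((t1:ℂ) + t2*omegaCM)*3 = 1 := by
    rw [← hsC, ← hβ, ← htC]
    have : ((s * β + t * 3 : EisensteinInts) : ℂ) = ((1 : EisensteinInts) : ℂ) := by
      rw [hs, ht, hyz]
    push_cast at this
    exact this
  have hc1 : (((s1*c - s2*d + 3*t1) : ℤ):ℂ) + (((s1*d + s2*c - s2*d + 3*t2) : ℤ):ℂ)*omegaCM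
      = ((1:ℤ):ℂ) + ((0:ℤ):ℂ)*omegaCM := by
    push_cast
    linear_combination hC - ((s2:ℂ)*(d:ℂ))*omega_sq
  obtain ⟨heq1, heq2⟩ := coeff_unique hc1
  -- β is invertible mod 3 : 3 ∤ c + d
  have hres : ¬ (3:ℤ) ∣ (c + d) := by
    intro h3
    obtain ⟨w0, hw0⟩ := h3
    have hn3 : c^2 - c*d + d^2 = 3*(3*w0^2 - c*d) := by linear_combination (c + d + 3*w0)*hw0
    have heq1' : s1*c - s2*d = 1 - 3*t1 := by linarith [heq1]
    have heq2' : s1*d + s2*c - s2*d = -3*t2 := by linarith [heq2]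
    have key2 : (s1^2 - s1*s2 + s2^2) * (c^2 - c*d + d^2)
        = (1 - 3*t1)^2 - (1 - 3*t1)*(-3*t2) + (-3*t2)^2 := by
      rw [← heq1', ← heq2']; ring
    have h1eq : (1:ℤ) = 3 * ((s1^2 - s1*s2 + s2^2)*(3*w0^2 - c*d)
        - (-2*t1 + 3*t1^2 + t2 - 3*t1*t2 + 3*t2^2)) := by
      linear_combination (s1^2 - s1*s2 + s2^2) * hn3 - key2
    obtain ⟨X, hX⟩ : ∃ X : ℤ, (1:ℤ) = 3*X := ⟨_, h1eq⟩
    omega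
  -- choose the right unit
  have hcase : ∃ u1 u2 v1 v2 : ℤ, (u1*v1 - u2*v2 = 1 ∧ u1*v2 + u2*v1 - u2*v2 = 0)
      ∧ (3:ℤ) ∣ (u1*c - u2*d - 1) ∧ (3:ℤ) ∣ (u1*d + u2*c - u2*d) := by
    have h6 : (c % 3 = 1 ∧ d % 3 = 0) ∨ (c % 3 = 2 ∧ d % 3 = 0)
        ∨ (c % 3 = 0 ∧ d % 3 = 1) ∨ (c % 3 = 0 ∧ d % 3 = 2)
        ∨ (c % 3 = 1 ∧ d % 3 = 1) ∨ (c % 3 = 2 ∧ d % 3 = 2) := by omega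
    rcases h6 with ⟨h7,h8⟩|⟨h7,h8⟩|⟨h7,h8⟩|⟨h7,h8⟩|⟨h7,h8⟩|⟨h7,h8⟩
    · exact ⟨1, 0, 1, 0, ⟨by norm_num, by norm_num⟩, by omega, by omega⟩
    · exact ⟨-1, 0, -1, 0, ⟨by norm_num, by norm_num⟩, by omega, by omega⟩
    · exact ⟨-1, -1, 0, 1, ⟨by norm_num, by norm_num⟩, by omega, by omega⟩
    · exact ⟨1, 1, 0, -1, ⟨by norm_num, by norm_num⟩, by omega, by omega⟩
    · exact ⟨0, -1, 1, 1, ⟨by norm_num, by norm_num⟩, by omega, by omega⟩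
    · exact ⟨0, 1, -1, -1, ⟨by norm_num, by norm_num⟩, by omega, by omega⟩
  obtain ⟨u1, u2, v1, v2, ⟨huv1, huv2⟩, ⟨A, hA⟩, ⟨B, hB⟩⟩ := hcase
  refine ⟨1, A - B, -B, Or.inl rfl, ?_⟩
  rw [hspan]
  set u : EisensteinInts := ((u1:ℤ):EisensteinInts) + ((u2:ℤ):EisensteinInts) * omegaE with hu
  set v : EisensteinInts := ((v1:ℤ):EisensteinInts) + ((v2:ℤ):EisensteinInts) * omegaE with hv
  have huv : u * v = 1 := by
    have huv1C : (u1:ℂ)*(v1:ℂ) - (u2:ℂ)*(v2:ℂ) = 1 := by exact_mod_cast huv1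
    have huv2C : (u1:ℂ)*(v2:ℂ) + (u2:ℂ)*(v1:ℂ) - (u2:ℂ)*(v2:ℂ) = 0 := by exact_mod_cast huv2
    apply Subtype.ext
    show ((u*v : EisensteinInts):ℂ) = ((1 : EisensteinInts):ℂ)
    rw [hu, hv]
    push_cast [omegaE]
    linear_combination huv1C + omegaCM * huv2C + ((u2:ℂ)*(v2:ℂ))*omega_sq
  have hAC : (u1:ℂ)*(c:ℂ) - (u2:ℂ)*(d:ℂ) - 1 = 3*(A:ℂ) := by exact_mod_cast hA
  have hBC : (u1:ℂ)*(d:ℂ) + (u2:ℂ)*(c:ℂ) - (u2:ℂ)*(d:ℂ) = 3*(B:ℂ) := by exact_mod_cast hB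
  have hgen : ((1:ℤ):EisensteinInts) + 3*((((A-B):ℤ):EisensteinInts)
      + (((-B):ℤ):EisensteinInts)*omegaE^2) = u * β := by
    apply Subtype.ext
    show _ = ((u*β : EisensteinInts):ℂ)
    rw [hu]
    push_cast [omegaE, hβ, show ((3:EisensteinInts):ℂ) = 3 from rfl]
    linear_combination (norm := (push_cast; ring)) (-1:ℂ)*hAC - omegaCM*hBC - (3*(B:ℂ) + (u2:ℂ)*(d:ℂ))*omega_sq
  rw [hgen]
  have hassoc : Associated β (u * β) :=
    ⟨⟨u, v, huv, by rwa [mul_comm] at huv⟩, mul_comm β u⟩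
  exact Ideal.span_singleton_eq_span_singleton.mpr hassoc
end
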